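/- If n and k are coprime positive integers, then there exists a bijection between N_{n,k} (the set of rotation-classes of (n,k)-codes, i.e., binary necklaces with n black beads and k white beads) and F_{n,k,0} (the set of (n,k)-codes with weighted sum 0 in ZMod n). -/
import Mathlib


open Finset

/-- An `(n,k)`-code: `f : ZMod n → ℕ` with total sum `k`. -/
def IsCode (n : ℕ) [NeZero n] (k : ℕ) (f : ZMod n → ℕ) : Prop :=
  ∑ i : ZMod n, f i = k

/-- The weighted sum `W(f) = ∑ i · f(i)` in `ZMod n`. -/
def wsum (n : ℕ) [NeZero n] (f : ZMod n → ℕ) : ZMod n :=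
  ∑ i : ZMod n, i * (f i : ZMod n)

/-- The rotation `c`, defined by `(c f) i = f (i+1)`. -/
def rot (n : ℕ) [NeZero n] (f : ZMod n → ℕ) : ZMod n → ℕ := fun i => f (i + 1)

/-- A code is aperiodic (has period `n`) if `c^j f = f` implies `n ∣ j`. -/
def Aperiodic (n : ℕ) [NeZero n] (f : ZMod n → ℕ) : Prop :=
  ∀ j : ℕ, (rot n)^[j] f = f → n ∣ j

/-- The rotation class (orbit under `c`) of a code. -/
def rotOrbit (n : ℕ) [NeZero n] (f : ZMod n → ℕ) : Set (ZMod n → ℕ) :=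
  {g | ∃ j : ℕ, (rot n)^[j] f = g}


/-- The set `N_{n,k}` of binary necklaces with `n` black and `k` white beads,
realized as rotation-classes of `(n,k)`-codes. -/
def necklaces (n k : ℕ) [NeZero n] : Set (Set (ZMod n → ℕ)) :=
  {S | ∃ f : ZMod n → ℕ, IsCode n k f ∧ S = rotOrbit n f}

lemma rot_iterate (n : ℕ) [NeZero n] (f : ZMod n → ℕ) (j : ℕ) (i : ZMod n) :
    (rot n)^[j] f i = f (i + j) := by
  induction j generalizing f i with
  | zero => simp
  | succ j ih =>
      rw [Function.iterate_succ_apply, ih]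
      show f (i + j + 1) = _
      push_cast
      ring_nf

lemma rot_n_dvd (n : ℕ) [NeZero n] (f : ZMod n → ℕ) {j : ℕ} (h : n ∣ j) :
    (rot n)^[j] f = f := by
  funext i
  rw [rot_iterate]
  have : (j : ZMod n) = 0 := (ZMod.natCast_eq_zero_iff j n).mpr h
  rw [this, add_zero]

lemma isCode_rot (n k : ℕ) [NeZero n] (f : ZMod n → ℕ) (j : ℕ) (h : IsCode n k f) :
    IsCode n k ((rot n)^[j] f) := by
  unfold IsCode at *
  rw [← h]
  simp only [rot_iterate]
  exact Fintype.sum_equiv (Equiv.addRight (j : ZMod n)) _ _ (fun i => rfl)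

lemma wsum_rot (n k : ℕ) [NeZero n] (f : ZMod n → ℕ) (j : ℕ) (h : IsCode n k f) :
    wsum n ((rot n)^[j] f) = wsum n f - j * k := by
  unfold wsum
  simp only [rot_iterate]
  have h1 : ∑ i : ZMod n, i * (f (i + j) : ZMod n)
      = ∑ t : ZMod n, (t - j) * (f t : ZMod n) :=
    Fintype.sum_equiv (Equiv.addRight (j : ZMod n)) _ _ (fun i => by simp)
  rw [h1]
  simp only [sub_mul, Finset.sum_sub_distrib]
  congr 1
  rw [← Finset.mul_sum, ← Nat.cast_sum, h]

lemma orbit_rot (n : ℕ) [NeZero n] (f : ZMod n → ℕ) (j : ℕ) :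
    rotOrbit n ((rot n)^[j] f) = rotOrbit n f := by
  ext g
  constructor
  · rintro ⟨m, rfl⟩
    exact ⟨m + j, Function.iterate_add_apply _ m j f⟩
  · rintro ⟨m, rfl⟩
    refine ⟨m + j * (n - 1), ?_⟩
    rw [← Function.iterate_add_apply]
    have hn : (n - 1) + 1 = n := Nat.succ_pred_eq_of_pos (Nat.pos_of_ne_zero (NeZero.ne n))
    have : m + j * (n - 1) + j = m + j * n := by
      have : j * (n - 1) + j = j * n := by nth_rewrite 2 [← hn]; ring
      omega
    rw [this, Function.iterate_add_apply, rot_n_dvd n f ⟨j, mul_comm j n⟩]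


/-- If `n` and `k` are coprime, there is a bijection between `N_{n,k}` and `F_{n,k,0}`,
the `(n,k)`-codes with weighted sum `0`. -/
theorem coprime_necklace_bijection (n k : ℕ) [NeZero n] (hk : 0 < k)
    (hco : Nat.Coprime n k) :
    Nonempty
      (necklaces n k ≃ {f : ZMod n → ℕ // IsCode n k f ∧ wsum n f = 0}) := by
  have hku : IsUnit (k : ZMod n) := by
    simpa [ZMod.coe_unitOfCoprime] using (ZMod.unitOfCoprime k hco.symm).isUnit
  set Φ : {f : ZMod n → ℕ // IsCode n k f ∧ wsum n f = 0} → necklaces n k :=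
    fun f => ⟨rotOrbit n f.1, f.1, f.2.1, rfl⟩ with hΦ
  have hbij : Function.Bijective Φ := by
    constructor
    · rintro ⟨f, hf, hwf⟩ ⟨g, hg, hwg⟩ h
      have horb : rotOrbit n f = rotOrbit n g := congrArg Subtype.val h
      have hgmem : g ∈ rotOrbit n f := horb ▸ ⟨0, rfl⟩
      obtain ⟨j, hj⟩ := hgmem
      have hw : wsum n ((rot n)^[j] f) = wsum n f - j * k := wsum_rot n k f j hf
      rw [hj, hwg, hwf, zero_sub] at hw
      have hw0 : ((j * k : ℕ) : ZMod n) = 0 := by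
        rw [Nat.cast_mul]
        have := hw.symm
        rwa [neg_eq_zero] at this
      have hdvd : n ∣ j * k := (ZMod.natCast_eq_zero_iff _ _).mp hw0
      have hnj : n ∣ j := hco.dvd_of_dvd_mul_right hdvd
      have : (rot n)^[j] f = f := rot_n_dvd n f hnj
      exact Subtype.ext (show f = g from this ▸ hj)
    · rintro ⟨S, f, hf, rfl⟩
      set j : ℕ := (wsum n f * (↑k)⁻¹).val with hj
      have hjcast : (j : ZMod n) = wsum n f * (↑k)⁻¹ := by
        simp [hj, ZMod.natCast_val, ZMod.cast_id]
      refine ⟨⟨(rot n)^[j] f, isCode_rot n k f j hf, ?_⟩, ?_⟩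
      · rw [wsum_rot n k f j hf, hjcast, mul_assoc,
          ZMod.inv_mul_of_unit _ hku, mul_one, sub_self]
      · exact Subtype.ext (orbit_rot n f j)
  exact ⟨(Equiv.ofBijective Φ hbij).symm⟩
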